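/- arXiv:2604.16905 — 5 statements merged into one kernel-verified Lean document; each statement's English description precedes it below -/
import Mathlib

section
/- Let $u = 2m+1$ with $m \geq 1$, and consider the polynomial $f = (y_1 - \frac{u}{3}y_3)(y_2 - \frac{u}{3}y_3)(y_1 - y_2)^{u-2}$ in variables $y_1, y_2, y_3$ over $\mathbb{Q}$. Then the coefficient of the monomial $y_1^m y_2^m y_3$ in $f$ is zero. -/
open MvPolynomial

/-- With `u = 2m+1`, the coefficient of `y₁^m y₂^m y₃` in
`f = (y₁ - (u/3) y₃)(y₂ - (u/3) y₃)(y₁ - y₂)^{u-2}` is zero. -/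
theorem stmt3 (m : ℕ) (hm : 1 ≤ m) :
    let u : ℕ := 2 * m + 1
    let f : MvPolynomial (Fin 3) ℚ :=
      (X 0 - C ((u : ℚ) / 3) * X 2) * (X 1 - C ((u : ℚ) / 3) * X 2) * (X 0 - X 1) ^ (u - 2)
    MvPolynomial.coeff
      (Finsupp.single 0 m + Finsupp.single 1 m + Finsupp.single 2 1) f = 0 := by
  intro u f
  set σ : Equiv.Perm (Fin 3) := Equiv.swap 0 1 with hσ
  set d : Fin 3 →₀ ℕ := Finsupp.single 0 m + Finsupp.single 1 m + Finsupp.single 2 1 with hd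
  have h0 : σ 0 = 1 := Equiv.swap_apply_left _ _
  have h1 : σ 1 = 0 := Equiv.swap_apply_right _ _
  have h2 : σ 2 = 2 := Equiv.swap_apply_of_ne_of_ne (by decide) (by decide)
  have hmap : Finsupp.mapDomain σ d = d := by
    rw [hd, Finsupp.mapDomain_add, Finsupp.mapDomain_add, Finsupp.mapDomain_single,
      Finsupp.mapDomain_single, Finsupp.mapDomain_single, h0, h1, h2]
    rw [add_comm (Finsupp.single (1:Fin 3) m) (Finsupp.single 0 m)]
  have hodd : Odd (u - 2) := by
    refine ⟨m - 1, ?_⟩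
    omega
  have hren : rename σ f = -f := by
    have : rename σ f =
        (X 1 - C ((u : ℚ) / 3) * X 2) * (X 0 - C ((u : ℚ) / 3) * X 2) * (X 1 - X 0) ^ (u - 2) := by
      simp only [f, map_mul, map_sub, map_pow, rename_X, rename_C, h0, h1, h2]
    rw [this, ← neg_sub (X (0:Fin 3)) (X 1), hodd.neg_pow]
    simp only [f]
    ring
  have hkey : coeff (Finsupp.mapDomain σ d) (rename σ f) = coeff d f :=
    coeff_rename_mapDomain σ σ.injective f d
  rw [hmap, hren, coeff_neg] at hkey
  linarith
end

section
/- Let $G$ be a finite simple graph with $n \geq 1$ vertices and $e$ edges. Then $G$ contains an independent set of size at least $\frac{n}{2e/n + 1} = \frac{n^2}{2e + n}$. -/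
/-!
Caro–Wei greedy argument: repeatedly put a vertex of minimum degree into the independent set and
delete its closed neighbourhood. Each deletion removes at most `1` from the weight
`∑ v, 1 / (deg v + 1)` of the remaining graph, so the independent set found has at least that many
vertices. Cauchy–Schwarz (in Sedrakyan's form) bounds the weight below by `n² / ∑ v, (deg v + 1)`,
and `∑ v, (deg v + 1) = 2e + n`.
-/

open Finset

lemma Finset.sum_one_div_add_one_le_one {ι : Type*} {N : Finset ι} {d : ι → ℕ}
    (h : ∀ u ∈ N, #N ≤ d u + 1) : ∑ u ∈ N, (1 : ℝ) / (d u + 1) ≤ 1 := by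
  calc ∑ u ∈ N, (1 : ℝ) / (d u + 1)
      ≤ ∑ _u ∈ N, (1 : ℝ) / #N := by
        refine sum_le_sum fun u hu => one_div_le_one_div_of_le ?_ ?_
        · exact_mod_cast card_pos.2 ⟨u, hu⟩
        · exact_mod_cast h u hu
    _ = #N * (1 / #N) := by rw [sum_const, nsmul_eq_mul]
    _ ≤ 1 := by rw [mul_one_div]; exact div_self_le_one _

namespace SimpleGraph

variable {V : Type*} (G : SimpleGraph V) [DecidableRel G.Adj]

noncomputable def caroWei (s : Finset V) : ℝ :=
  ∑ v ∈ s, 1 / (#{w ∈ s | G.Adj v w} + 1)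

variable {G}

section DecidableEq

variable [DecidableEq V]

lemma caroWei_le_caroWei_sdiff_add_one {s : Finset V} {v : V} (hv : v ∈ s)
    (hmin : ∀ u ∈ s, #{w ∈ s | G.Adj v w} ≤ #{w ∈ s | G.Adj u w}) :
    G.caroWei s ≤ G.caroWei (s \ insert v {w ∈ s | G.Adj v w}) + 1 := by
  set N := insert v {w ∈ s | G.Adj v w}
  have hNs : N ⊆ s := insert_subset hv (filter_subset _ _)
  have hN : #N = #{w ∈ s | G.Adj v w} + 1 :=
    card_insert_of_notMem fun h => G.irrefl (mem_filter.1 h).2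
  rw [caroWei, ← sum_sdiff hNs]
  refine add_le_add (sum_le_sum fun u _ => one_div_le_one_div_of_le (by positivity) ?_) ?_
  · exact_mod_cast Nat.add_le_add_right (card_le_card (filter_subset_filter _ sdiff_subset)) 1
  · exact sum_one_div_add_one_le_one fun u hu => hN ▸ Nat.add_le_add_right (hmin u (hNs hu)) 1

theorem exists_isIndepSet_subset_caroWei_le (s : Finset V) :
    ∃ t ⊆ s, G.IsIndepSet (t : Set V) ∧ G.caroWei s ≤ #t := by
  induction s using Finset.strongInduction with
  | H s ih =>
  obtain rfl | hs := s.eq_empty_or_nonempty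
  · exact ⟨∅, subset_rfl, by simp, by simp [caroWei]⟩
  obtain ⟨v, hv, hmin⟩ := s.exists_min_image (fun u => #{w ∈ s | G.Adj u w}) hs
  set N := insert v {w ∈ s | G.Adj v w}
  obtain ⟨t, hts, ht, hwt⟩ :=
    ih (s \ N) (sdiff_ssubset (insert_subset hv (filter_subset _ _)) ⟨v, mem_insert_self _ _⟩)
  have htN : ∀ w ∈ t, w ∉ N := fun w hw => (mem_sdiff.1 (hts hw)).2
  have hvt : ∀ w ∈ t, ¬G.Adj v w := fun w hw h =>
    htN w hw (mem_insert_of_mem (mem_filter.2 ⟨(mem_sdiff.1 (hts hw)).1, h⟩))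
  refine ⟨insert v t, insert_subset hv (hts.trans sdiff_subset), ?_, ?_⟩
  · rw [coe_insert]
    exact ht.insert fun w hw _ => ⟨hvt w hw, fun h => hvt w hw h.symm⟩
  · rw [card_insert_of_notMem fun h => htN v h (mem_insert_self _ _), Nat.cast_succ]
    linarith [caroWei_le_caroWei_sdiff_add_one hv hmin]

end DecidableEq

variable [Fintype V]

lemma caroWei_univ : G.caroWei univ = ∑ v, (1 : ℝ) / (G.degree v + 1) := by
  simp only [caroWei, ← neighborFinset_eq_filter, card_neighborFinset_eq_degree]

variable (G)

lemma sq_card_div_le_sum_one_div_degree_add_one :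
    (Fintype.card V : ℝ) ^ 2 / (2 * #G.edgeFinset + Fintype.card V) ≤
      ∑ v, (1 : ℝ) / (G.degree v + 1) := by
  have hsum : ∑ v, ((G.degree v : ℝ) + 1) = 2 * #G.edgeFinset + Fintype.card V := by
    rw [sum_add_distrib, ← Nat.cast_sum, sum_degrees_eq_twice_card_edges]
    simp
  simpa [hsum] using sq_sum_div_le_sum_sq_div univ (fun _ => (1 : ℝ))
    (g := fun v => (G.degree v : ℝ) + 1) fun v _ => by positivity

end SimpleGraph

theorem stmt6_general {V : Type*} [Fintype V] [DecidableEq V] (G : SimpleGraph V)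
    [DecidableRel G.Adj] :
    ∃ s : Finset V, (∀ v ∈ s, ∀ w ∈ s, ¬ G.Adj v w) ∧
      (Fintype.card V : ℝ) ^ 2 / (2 * G.edgeFinset.card + Fintype.card V) ≤ s.card := by
  obtain ⟨t, -, ht, hwt⟩ := G.exists_isIndepSet_subset_caroWei_le univ
  refine ⟨t, fun v hv w hw hvw => ht hv hw (G.ne_of_adj hvw) hvw, ?_⟩
  calc _ ≤ ∑ v, (1 : ℝ) / (G.degree v + 1) := G.sq_card_div_le_sum_one_div_degree_add_one
    _ = G.caroWei univ := SimpleGraph.caroWei_univ.symm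
    _ ≤ t.card := hwt

/-- Turán's theorem (independence number form): a finite simple graph with `n ≥ 1`
vertices and `e` edges has an independent set of size at least `n²/(2e+n)`. -/
theorem stmt6 {V : Type*} [Fintype V] [DecidableEq V] (G : SimpleGraph V)
    [DecidableRel G.Adj] (hn : 1 ≤ Fintype.card V) :
    ∃ s : Finset V, (∀ v ∈ s, ∀ w ∈ s, ¬ G.Adj v w) ∧
      (Fintype.card V : ℝ) ^ 2 / (2 * G.edgeFinset.card + Fintype.card V) ≤ s.card :=
  stmt6_general G
end

section
/- Suppose $(a_0, a_1, \dots, a_m)$ is an M-sequence and for each $i$ write $a_i = \binom{x_i}{i}$ for a real number $x_i \geq i$ (generalized binomial coefficient). Then $a_{i+1} \leq \binom{x_i + 1}{i+1}$ for all $1 \leq i \leq m-1$. -/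
/-- Macaulay's operation `n^⟨i⟩` (first argument is `i`), defined greedily:
if `n = C(n_i, i) + C(n_{i-1}, i-1) + ... + C(n_j, j)` is the Macaulay representation,
then `n^⟨i⟩ = C(n_i+1, i+1) + C(n_{i-1}+1, i) + ... + C(n_j+1, j+1)`, and `0^⟨i⟩ = 0`. -/
def macaulaySucc : ℕ → ℕ → ℕ
  | _, 0 => 0
  | 0, _ + 1 => 0
  | i + 1, n + 1 =>
    let b := Nat.findGreatest (fun b => Nat.choose b (i + 1) ≤ n + 1) (n + i + 2)
    Nat.choose (b + 1) (i + 2) + macaulaySucc i (n + 1 - Nat.choose b (i + 1))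

/-- `(a 0, a 1, …, a m)` is an M-sequence: `a 0 = 1` and `a (i+1) ≤ (a i)^⟨i⟩`. -/
def IsMSequence (a : ℕ → ℕ) (m : ℕ) : Prop :=
  a 0 = 1 ∧ ∀ i, 1 ≤ i → i ≤ m - 1 → a (i + 1) ≤ macaulaySucc i (a i)

/-- The generalized binomial coefficient `C(x, k) = x(x-1)⋯(x-k+1)/k!` for real `x`. -/
noncomputable def rchoose (x : ℝ) (k : ℕ) : ℝ :=
  (∏ j ∈ Finset.range k, (x - j)) / (Nat.factorial k)

noncomputable def pp (x : ℝ) (k : ℕ) : ℝ := ∏ j ∈ Finset.range k, (x - j)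

lemma rchoose_def (x : ℝ) (k : ℕ) : rchoose x k = pp x k / (Nat.factorial k) := rfl

lemma pp_nonneg {k : ℕ} {x : ℝ} (h : (k : ℝ) - 1 ≤ x) : 0 ≤ pp x k := by
  apply Finset.prod_nonneg
  intro j hj
  have : (j : ℝ) ≤ (k : ℝ) - 1 := by
    have := Finset.mem_range.mp hj
    have : (j : ℝ) + 1 ≤ k := by exact_mod_cast this
    linarith
  linarith

lemma pp_pos {k : ℕ} {x : ℝ} (h : (k : ℝ) - 1 < x) : 0 < pp x k := by
  apply Finset.prod_pos
  intro j hj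
  have : (j : ℝ) ≤ (k : ℝ) - 1 := by
    have := Finset.mem_range.mp hj
    have : (j : ℝ) + 1 ≤ k := by exact_mod_cast this
    linarith
  linarith

lemma pp_mono {k : ℕ} {x y : ℝ} (h : (k : ℝ) - 1 ≤ x) (hxy : x ≤ y) : pp x k ≤ pp y k := by
  apply Finset.prod_le_prod
  · intro j hj
    have := Finset.mem_range.mp hj
    have : (j : ℝ) + 1 ≤ k := by exact_mod_cast this
    linarith
  · intro j _; linarith

lemma pp_strictMono {k : ℕ} (hk : 0 < k) {x y : ℝ} (h : (k : ℝ) - 1 ≤ x) (hxy : x < y) :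
    pp x k < pp y k := by
  rcases eq_or_lt_of_le h with heq | hlt
  · have h0 : pp x k = 0 := by
      apply Finset.prod_eq_zero (Finset.mem_range.mpr (Nat.sub_lt hk one_pos))
      have : ((k - 1 : ℕ) : ℝ) = (k : ℝ) - 1 := by
        have : 1 ≤ k := hk
        push_cast [Nat.cast_sub this]
        ring
      rw [this, ← heq]; ring
    rw [h0]
    exact pp_pos (lt_of_le_of_lt h hxy)
  · apply Finset.prod_lt_prod_of_nonempty
    · intro j hj
      have := Finset.mem_range.mp hj
      have : (j : ℝ) + 1 ≤ k := by exact_mod_cast this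
      linarith
    · intro j _; linarith
    · exact ⟨0, Finset.mem_range.mpr hk⟩

lemma pp_succ (x : ℝ) (k : ℕ) : pp x (k + 1) = pp x k * (x - k) := Finset.prod_range_succ _ _

lemma pp_shift (x : ℝ) (k : ℕ) : pp (x + 1) (k + 1) = (x + 1) * pp x k := by
  rw [pp, Finset.prod_range_succ']
  have h1 : ∀ j ∈ Finset.range k, (x + 1 - ((j:ℕ) + 1 : ℕ)) = x - j := by
    intro j _; push_cast; ring
  rw [Finset.prod_congr rfl h1]
  simp only [Nat.cast_zero, sub_zero]
  rw [pp]; ring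

lemma factorial_succ_real (k : ℕ) : ((Nat.factorial (k+1) : ℝ)) = (k+1) * (Nat.factorial k) := by
  rw [Nat.factorial_succ]; push_cast; ring

lemma rchoose_pascal (x : ℝ) (k : ℕ) :
    rchoose (x + 1) (k + 1) = rchoose x (k + 1) + rchoose x k := by
  rw [rchoose_def, rchoose_def, rchoose_def, pp_shift, pp_succ, factorial_succ_real]
  have h1 : (Nat.factorial k : ℝ) ≠ 0 := by positivity
  have h2 : ((k : ℝ) + 1) ≠ 0 := by positivity
  field_simp
  ring

lemma rchoose_zero (x : ℝ) : rchoose x 0 = 1 := by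
  simp [rchoose_def, pp]

lemma rchoose_nat (n k : ℕ) : rchoose (n : ℝ) k = Nat.choose n k := by
  induction n generalizing k with
  | zero =>
    cases k with
    | zero => simp [rchoose_zero]
    | succ k =>
      have h0 : pp (0 : ℝ) (k+1) = 0 :=
        Finset.prod_eq_zero (Finset.mem_range.mpr (Nat.succ_pos k)) (by simp)
      rw [Nat.cast_zero, rchoose_def, h0]
      simp
  | succ n ih =>
    cases k with
    | zero => simp [rchoose_zero]
    | succ k =>
      have : ((n : ℝ) + 1) = (n : ℝ) + 1 := rfl
      push_cast
      rw [rchoose_pascal (n : ℝ) k, ih (k+1), ih k]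
      rw [Nat.choose_succ_succ]
      push_cast
      ring

lemma rchoose_nonneg {k : ℕ} {x : ℝ} (h : (k : ℝ) - 1 ≤ x) : 0 ≤ rchoose x k := by
  rw [rchoose_def]
  have := pp_nonneg h
  positivity

lemma rchoose_mono {k : ℕ} {x y : ℝ} (h : (k : ℝ) - 1 ≤ x) (hxy : x ≤ y) :
    rchoose x k ≤ rchoose y k := by
  rw [rchoose_def, rchoose_def]
  have h1 := pp_mono h hxy
  have h2 : (0:ℝ) < Nat.factorial k := by positivity
  exact div_le_div_of_nonneg_right h1 h2.le

/-- Key product inequality `D(k)`. -/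
lemma lemD (k : ℕ) : ∀ b t : ℝ, (k : ℝ) ≤ b → 0 ≤ t → t ≤ 1 →
    pp (b + t) k * (b + t - k) ≤ pp b k * (b + t - k + k * t) := by
  induction k with
  | zero =>
    intro b t _ ht _
    simp [pp]
  | succ k ih =>
    intro b t hb ht ht1
    have hk : (k : ℝ) ≤ b := by push_cast at hb ⊢; linarith
    have IH := ih b t hk ht ht1
    have hppb : 0 ≤ pp b k := pp_nonneg (by linarith)
    have hppbt : 0 ≤ pp (b + t) k := pp_nonneg (by linarith)
    rw [pp_succ, pp_succ]
    push_cast at hb ⊢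
    have h1 : 0 ≤ b + t - (k + 1) := by linarith
    -- LHS = pp(b+t) k * (b+t-k) * (b+t-k-1)
    have step1 : pp (b + t) k * (b + t - k) * (b + t - (k + 1)) ≤
        pp b k * (b + t - k + k * t) * (b + t - (k + 1)) := by
      apply mul_le_mul_of_nonneg_right IH h1
    have step2 : pp b k * (b + t - k + k * t) * (b + t - (k + 1)) ≤
        pp b k * (b - k) * (b + t - (k + 1) + (k + 1) * t) := by
      have key : (b + t - k + k * t) * (b + t - (k + 1)) ≤
          (b - k) * (b + t - (k + 1) + (k + 1) * t) := by nlinarith [mul_nonneg ht (sub_nonneg.mpr ht1)]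
      calc pp b k * (b + t - k + k * t) * (b + t - (k + 1))
          = pp b k * ((b + t - k + k * t) * (b + t - (k + 1))) := by ring
        _ ≤ pp b k * ((b - k) * (b + t - (k + 1) + (k + 1) * t)) := by
            apply mul_le_mul_of_nonneg_left key hppb
        _ = pp b k * (b - k) * (b + t - (k + 1) + (k + 1) * t) := by ring
    calc pp (b + t) k * (b + t - k) * (b + t - (k + 1)) ≤ _ := step1
      _ ≤ _ := step2

/-- The crux "KL" lemma. -/
lemma KL (k : ℕ) (b X y : ℝ) (hb : (k : ℝ) + 1 ≤ b) (hbX : b ≤ X) (hXb : X ≤ b + 1)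
    (hy1 : (k : ℝ) - 1 ≤ y) (hy2 : y ≤ X - 1)
    (hcon : rchoose y k = rchoose X (k + 1) - rchoose b (k + 1)) :
    rchoose y (k + 1) ≤ rchoose X (k + 2) - rchoose b (k + 2) := by
  have hfk : (0:ℝ) < Nat.factorial k := by positivity
  have hfk1 : ((Nat.factorial (k+1) : ℝ)) = (k+1) * (Nat.factorial k) := by
    rw [Nat.factorial_succ]; push_cast; ring
  have hfk2 : ((Nat.factorial (k+2) : ℝ)) = (k+2) * ((k+1) * (Nat.factorial k)) := by
    rw [Nat.factorial_succ, Nat.factorial_succ]; push_cast; ring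
  -- convert constraint to pp level
  have hcon' : (k + 1) * pp y k = pp X (k + 1) - pp b (k + 1) := by
    rw [rchoose_def, rchoose_def, rchoose_def, hfk1] at hcon
    field_simp at hcon
    nlinarith [hcon]
  -- goal at pp level
  rw [rchoose_def, rchoose_def, rchoose_def, hfk1, hfk2]
  rw [← sub_div]
  -- reduce to: (k+2) * pp y (k+1) ≤ pp X (k+2) - pp b (k+2)
  have main : (k + 2) * pp y (k + 1) ≤ pp X (k + 2) - pp b (k + 2) := by
    have hA : 0 ≤ pp y k := pp_nonneg hy1
    set t := X - b with htdef
    have ht : 0 ≤ t := by simp only [htdef]; linarith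
    have ht1 : t ≤ 1 := by simp only [htdef]; linarith
    have hD := lemD (k+1) b t (by push_cast; linarith) ht ht1
    have hXbt : b + t = X := by simp only [htdef]; ring
    rw [hXbt] at hD
    rw [pp_succ X (k+1), pp_succ b (k+1), pp_succ y k]
    push_cast at hD ⊢
    set A := pp y k with hAdef
    set P := pp X (k+1) with hPdef
    set Q := pp b (k+1) with hQdef
    have hQ0 : 0 ≤ Q := pp_nonneg (by push_cast; linarith)
    have hS : y - (k:ℝ) ≤ X - ((k:ℝ)+1) := by linarith
    have h2 : A * (y - (k:ℝ)) ≤ A * (X - ((k:ℝ)+1)) := mul_le_mul_of_nonneg_left hS hA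
    have h3 : ((k:ℝ)+1) * (A * (X - ((k:ℝ)+1))) ≤ ((k:ℝ)+1) * (t * Q) := by
      have e2 : ((k:ℝ)+1) * (A * (X - ((k:ℝ)+1))) = (P - Q) * (X - ((k:ℝ)+1)) := by
        rw [← hcon']; ring
      rw [e2]
      nlinarith [hD]
    have h4 : A * (X - ((k:ℝ)+1)) ≤ t * Q :=
      le_of_mul_le_mul_left h3 (by positivity)
    have e1 : P * (X - ((k:ℝ)+1)) - Q * (b - ((k:ℝ)+1))
        = (X - ((k:ℝ)+1)) * (((k:ℝ)+1) * A) + Q * t := by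
      rw [hcon']; ring
    nlinarith [h2, h4, e1]
  rw [div_le_div_iff₀ (by positivity) (by positivity)]
  calc pp y (k+1) * (((k:ℝ)+2) * (((k:ℝ)+1) * (Nat.factorial k)))
      = (((k:ℝ)+2) * pp y (k+1)) * (((k:ℝ)+1) * (Nat.factorial k)) := by ring
    _ ≤ (pp X (k+2) - pp b (k+2)) * (((k:ℝ)+1) * (Nat.factorial k)) :=
        mul_le_mul_of_nonneg_right main (by positivity)

lemma rchoose_continuous (k : ℕ) : Continuous (fun x : ℝ => rchoose x k) := by
  have : (fun x : ℝ => rchoose x k)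
      = fun x : ℝ => (∏ j ∈ Finset.range k, (x - j)) / (Nat.factorial k) := rfl
  rw [this]
  exact (continuous_finset_prod _ fun j _ => continuous_id.sub continuous_const).div_const _

lemma pp_at_left (k : ℕ) (hk : 0 < k) : pp ((k : ℝ) - 1) k = 0 := by
  apply Finset.prod_eq_zero (Finset.mem_range.mpr (Nat.sub_lt hk one_pos))
  have h1 : ((k - 1 : ℕ) : ℝ) = (k : ℝ) - 1 := by
    push_cast [Nat.cast_sub (Nat.one_le_iff_ne_zero.mpr hk.ne')]
    ring
  rw [h1]; ring

lemma rchoose_at_left (k : ℕ) (hk : 0 < k) : rchoose ((k : ℝ) - 1) k = 0 := by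
  rw [rchoose_def, pp_at_left k hk, zero_div]

/-- Intermediate value: hitting any value `c` between `0` and `rchoose M k`. -/
lemma rchoose_ivt (k : ℕ) (hk : 0 < k) (M c : ℝ) (hM : (k : ℝ) - 1 ≤ M)
    (hc0 : 0 ≤ c) (hcM : c ≤ rchoose M k) :
    ∃ y, (k : ℝ) - 1 ≤ y ∧ y ≤ M ∧ rchoose y k = c := by
  have h := intermediate_value_Icc hM ((rchoose_continuous k).continuousOn
    (s := Set.Icc ((k:ℝ)-1) M))
  have hmem : c ∈ Set.Icc (rchoose ((k:ℝ)-1) k) (rchoose M k) := by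
    rw [rchoose_at_left k hk]; exact ⟨hc0, hcM⟩
  obtain ⟨y, hy, hyc⟩ := h hmem
  exact ⟨y, hy.1, hy.2, hyc⟩

lemma sub_le_choose (m k : ℕ) : m - k ≤ Nat.choose m (k + 1) := by
  induction m with
  | zero => simp
  | succ m ih =>
    rcases Nat.lt_or_ge m k with h | h
    · have : m + 1 - k ≤ 1 := by omega
      rcases Nat.lt_or_ge (m+1) (k+1) with h2 | h2
      · simp [Nat.choose_eq_zero_of_lt h2] at *; omega
      · have : 0 < Nat.choose (m+1) (k+1) := Nat.choose_pos h2
        omega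
    · have h1 : 0 < Nat.choose m k := Nat.choose_pos h
      have h2 : Nat.choose (m+1) (k+1) = Nat.choose m k + Nat.choose m (k+1) :=
        Nat.choose_succ_succ m k
      omega

lemma rchoose_strictMono {k : ℕ} (hk : 0 < k) {x y : ℝ} (h : (k : ℝ) - 1 ≤ x) (hxy : x < y) :
    rchoose x k < rchoose y k := by
  rw [rchoose_def, rchoose_def]
  apply div_lt_div_of_pos_right (pp_strictMono hk h hxy) (by positivity)

/-- Main lemma: real Lovász-form Macaulay bound. -/
lemma macaulay_main (k : ℕ) : ∀ (n : ℕ) (x : ℝ), (k : ℝ) - 1 ≤ x →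
    (n : ℝ) ≤ rchoose x k → (macaulaySucc k n : ℝ) ≤ rchoose (x + 1) (k + 1) := by
  induction k with
  | zero =>
    intro n x hx _
    have h0 : macaulaySucc 0 n = 0 := by cases n <;> rfl
    rw [h0]
    push_cast
    exact rchoose_nonneg (by push_cast at hx ⊢; linarith)
  | succ k ih =>
    intro n x hx hn
    match n with
    | 0 =>
      have h0 : macaulaySucc (k+1) 0 = 0 := rfl
      rw [h0]
      push_cast
      exact rchoose_nonneg (by push_cast at hx ⊢; linarith)
    | n + 1 =>
      set b := Nat.findGreatest (fun b => Nat.choose b (k + 1) ≤ n + 1) (n + k + 2) with hbdef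
      have hrec : macaulaySucc (k+1) (n+1)
          = Nat.choose (b + 1) (k + 2) + macaulaySucc k (n + 1 - Nat.choose b (k + 1)) := rfl
      have hbk : k + 1 ≤ b := by
        rw [hbdef]
        exact Nat.le_findGreatest (P := fun m => Nat.choose m (k+1) ≤ n+1) (by omega)
          (by simp [Nat.choose_self])
      have hble : Nat.choose b (k+1) ≤ n + 1 := by
        rw [hbdef]
        exact Nat.findGreatest_spec (P := fun m => Nat.choose m (k+1) ≤ n+1) (m := k+1)
          (by omega) (by simp [Nat.choose_self])
      have hbgt : n + 1 < Nat.choose (b+1) (k+1) := by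
        by_contra hcon
        push_neg at hcon
        have hb2 : b + 1 ≤ n + k + 2 := by
          by_contra hb3
          push_neg at hb3
          have h3 : (n + k + 3) - k ≤ Nat.choose (n+k+3) (k+1) := sub_le_choose _ _
          have h4 : Nat.choose (n+k+3) (k+1) ≤ Nat.choose (b+1) (k+1) :=
            Nat.choose_le_choose _ (by omega)
          omega
        have := Nat.findGreatest_is_greatest (P := fun m => Nat.choose m (k+1) ≤ n+1)
          (k := b+1) (n := n + k + 2) (by omega) hb2
        exact this hcon
      have hbreal : (k : ℝ) + 1 ≤ (b : ℝ) := by exact_mod_cast hbk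
      have hx' : (k : ℝ) ≤ x := by push_cast at hx; linarith
      -- find X with equality
      obtain ⟨X, hX1, hX2, hXeq⟩ := rchoose_ivt (k+1) (Nat.succ_pos k) x ((n:ℝ)+1)
        (by push_cast; linarith) (by positivity)
        (by push_cast at hn ⊢; linarith)
      have hX1' : (k : ℝ) ≤ X := by push_cast at hX1; linarith
      have hmono : rchoose (X + 1) (k + 2) ≤ rchoose (x + 1) (k + 2) :=
        rchoose_mono (by push_cast; linarith) (by linarith)
      refine le_trans ?_ hmono
      -- b ≤ X ≤ b + 1
      have hbX : (b : ℝ) ≤ X := by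
        by_contra hbx
        push_neg at hbx
        have h1 : rchoose X (k+1) < rchoose (b : ℝ) (k+1) :=
          rchoose_strictMono (Nat.succ_pos k) (by push_cast; linarith) hbx
        rw [rchoose_nat b (k+1), hXeq] at h1
        have h2 : (Nat.choose b (k+1) : ℝ) ≤ (n : ℝ) + 1 := by exact_mod_cast hble
        linarith
      have hXb : X ≤ (b : ℝ) + 1 := by
        by_contra hxb
        push_neg at hxb
        have h1 : rchoose ((b:ℝ)+1) (k+1) ≤ rchoose X (k+1) :=
          rchoose_mono (by push_cast; linarith) hxb.le
        have h2 : rchoose ((b:ℝ)+1) (k+1) = Nat.choose (b+1) (k+1) := by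
          rw [← rchoose_nat (b+1) (k+1)]; push_cast; ring_nf
        rw [h2, hXeq] at h1
        have h3 : ((n:ℝ)+1) < (Nat.choose (b+1) (k+1) : ℝ) := by exact_mod_cast hbgt
        linarith
      -- the residual r
      set r := n + 1 - Nat.choose b (k+1) with hrdef
      rw [hrec]
      have hr_real : (r : ℝ) = rchoose X (k+1) - rchoose (b:ℝ) (k+1) := by
        rw [hXeq, rchoose_nat b (k+1), hrdef]
        push_cast [Nat.cast_sub hble]
        ring
      have hchoose_eq : ((Nat.choose (b+1) (k+2) : ℕ) : ℝ) = rchoose ((b:ℝ)+1) (k+2) := by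
        rw [← rchoose_nat (b+1) (k+2)]; push_cast; ring_nf
      rcases Nat.eq_zero_or_pos r with hr0 | hrpos
      · -- r = 0
        rw [hr0]
        have h0 : macaulaySucc k 0 = 0 := by cases k <;> rfl
        rw [h0]
        push_cast
        rw [hchoose_eq]
        rw [show rchoose ((b:ℝ)+1) (k+2) + (0:ℝ) = rchoose ((b:ℝ)+1) (k+2) from add_zero _]
        apply rchoose_mono
        · push_cast; linarith
        · linarith
      · -- r ≥ 1
        have hr_le : (r : ℝ) ≤ rchoose (X - 1) k := by
          have h1 : rchoose (X - 1) (k+1) ≤ rchoose (b:ℝ) (k+1) :=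
            rchoose_mono (by push_cast; linarith) (by linarith)
          have h2 := rchoose_pascal (X-1) k
          rw [show X - 1 + 1 = X by ring] at h2
          rw [hr_real]
          linarith
        have hy_ex : ∃ y, (k : ℝ) - 1 ≤ y ∧ y ≤ X - 1 ∧ rchoose y k = (r : ℝ) := by
          rcases Nat.eq_zero_or_pos k with hk0 | hkpos
          · subst hk0
            refine ⟨X - 1, by push_cast; linarith, le_refl _, ?_⟩
            rw [rchoose_zero]
            rw [rchoose_zero] at hr_le
            have h1 : r ≤ 1 := by exact_mod_cast hr_le
            have h2 : r = 1 := by omega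
            rw [h2]; norm_num
          · exact rchoose_ivt k hkpos (X - 1) (r : ℝ) (by linarith) (by positivity) hr_le
        obtain ⟨y, hy1, hy2, hyeq⟩ := hy_ex
        -- IH
        have hIH : (macaulaySucc k r : ℝ) ≤ rchoose (y + 1) (k + 1) :=
          ih r y hy1 (le_of_eq hyeq.symm)
        -- KL
        have hcon : rchoose y k = rchoose X (k + 1) - rchoose (b:ℝ) (k + 1) := by
          rw [hyeq, hr_real]
        have hKL := KL k (b:ℝ) X y hbreal hbX hXb hy1 hy2 hcon
        -- assemble with Pascal
        have hp1 := rchoose_pascal (b:ℝ) (k+1)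
        have hp2 := rchoose_pascal y k
        have hp3 := rchoose_pascal X (k+1)
        push_cast
        rw [hchoose_eq]
        push_cast at hp1 hp2 hp3 ⊢
        linarith

/-- If `(a 0, …, a m)` is an M-sequence with `a i = C(x i, i)` for reals `x i ≥ i`,
then `a (i+1) ≤ C(x i + 1, i+1)` for all `1 ≤ i ≤ m-1`. -/
theorem stmt11 (a : ℕ → ℕ) (m : ℕ) (ha : IsMSequence a m) (x : ℕ → ℝ)
    (hx : ∀ i ≤ m, (i : ℝ) ≤ x i ∧ (a i : ℝ) = rchoose (x i) i)
    (i : ℕ) (hi1 : 1 ≤ i) (hi2 : i ≤ m - 1) :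
    (a (i + 1) : ℝ) ≤ rchoose (x i + 1) (i + 1) := by
  obtain ⟨-, ha2⟩ := ha
  have him : i ≤ m := le_trans hi2 (Nat.sub_le m 1)
  obtain ⟨hxi, hai⟩ := hx i him
  have h1 : (a (i+1) : ℝ) ≤ (macaulaySucc i (a i) : ℝ) := by exact_mod_cast ha2 i hi1 hi2
  have h2 := macaulay_main i (a i) (x i) (by linarith) (le_of_eq hai)
  linarith
end

section
/- Let $(1, \ell_1, \dots, \ell_s)$ be a level sequence, i.e., the Hilbert function of an Artinian level standard graded algebra over a field, with socle concentrated in degree $s$. Then for all $i, j \geq 1$ with $i + j \leq s$, we have $\ell_i \leq \ell_j \cdot \ell_{i+j}$. -/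
/-- Key lemma: if `x ∈ N i` annihilates `N k` (`k ≥ 1`, `i + k ≤ s`), then `x = 0`. -/
theorem stmt15_key {𝕜 A : Type*} [Field 𝕜] [CommRing A] [Algebra 𝕜 A]
    (N : ℕ → Submodule 𝕜 A) (s : ℕ)
    (hmul : ∀ i j : ℕ, ∀ x ∈ N i, ∀ y ∈ N j, x * y ∈ N (i + j))
    (hlevel : ∀ i < s, ∀ y ∈ N i, (∀ z ∈ N 1, y * z = 0) → y = 0) :
    ∀ k, 1 ≤ k → ∀ i, i + k ≤ s → ∀ x ∈ N i, (∀ y ∈ N k, x * y = 0) → x = 0 := by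
  intro k
  induction k with
  | zero => omega
  | succ k ih =>
    intro _ i his x hx hann
    rcases Nat.eq_zero_or_pos k with hk0 | hkpos
    · subst hk0
      exact hlevel i (by omega) x hx fun z hz => hann z hz
    · apply hlevel i (by omega) x hx
      intro z hz
      refine ih hkpos (i + 1) (by omega) (x * z) (hmul i 1 x hx z hz) ?_
      intro w hw
      have hzw : z * w ∈ N (k + 1) := by
        have := hmul 1 k z hz w hw
        rwa [Nat.add_comm] at this
      rw [mul_assoc]
      exact hann (z * w) hzw

/-- If `(1, ℓ₁, …, ℓ_s)` is a level sequence — the Hilbert function of an Artinian level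
standard graded algebra `N = 𝕜 ⊕ N₁ ⊕ ⋯ ⊕ N_s` over a field `𝕜`, with socle concentrated
in degree `s` — then `ℓ_i ≤ ℓ_j · ℓ_{i+j}` for all `i, j ≥ 1` with `i + j ≤ s`. -/
theorem stmt15 {𝕜 A : Type*} [Field 𝕜] [CommRing A] [Algebra 𝕜 A] [FiniteDimensional 𝕜 A]
    (N : ℕ → Submodule 𝕜 A) (s : ℕ) (ℓ : ℕ → ℕ)
    -- the `N i` give an internal direct sum decomposition of `A`
    (hinternal : DirectSum.IsInternal N)
    -- graded algebra structure, standard (generated in degree one)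
    (h0 : N 0 = Submodule.span 𝕜 {(1 : A)})
    (hmul : ∀ i j : ℕ, ∀ x ∈ N i, ∀ y ∈ N j, x * y ∈ N (i + j))
    (hstd : ∀ i : ℕ, N (i + 1) = N 1 * N i)
    -- Artinian with socle degree `s`
    (htop : N s ≠ ⊥) (hvanish : ∀ i, s < i → N i = ⊥)
    -- level: the socle is concentrated in degree `s`
    (hlevel : ∀ i < s, ∀ y ∈ N i, (∀ z ∈ N 1, y * z = 0) → y = 0)
    -- Hilbert function
    (hℓ : ∀ i, ℓ i = Module.finrank 𝕜 (N i)) (hℓ0 : ℓ 0 = 1)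
    (i j : ℕ) (hi : 1 ≤ i) (hj : 1 ≤ j) (hij : i + j ≤ s) :
    ℓ i ≤ ℓ j * ℓ (i + j) := by
  -- multiplication as a bilinear map `N i → N j → N (i+j)`
  let Φ : (N i) →ₗ[𝕜] (N j) →ₗ[𝕜] (N (i + j)) :=
    LinearMap.mk₂ 𝕜 (fun x y => ⟨(x : A) * y, hmul i j x x.2 y y.2⟩)
      (fun x x' y => by ext; push_cast; ring)
      (fun c x y => by ext; exact smul_mul_assoc c x.1 y.1)
      (fun x y y' => by ext; push_cast; ring)
      (fun c x y => by ext; exact mul_smul_comm c x.1 y.1)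
  have hker : ∀ x : N i, Φ x = 0 → x = 0 := by
    intro x hx
    apply Subtype.ext
    refine stmt15_key N s hmul hlevel j hj i hij x.1 x.2 ?_
    intro y hy
    have := congrArg (fun f : (N j) →ₗ[𝕜] (N (i + j)) => ((f ⟨y, hy⟩ : N (i + j)) : A)) hx
    simpa [Φ] using this
  have hinj : Function.Injective Φ := by
    intro a b h
    have : a - b = 0 := hker _ (by rw [map_sub, h, sub_self])
    exact sub_eq_zero.mp this
  have h1 : ℓ i ≤ Module.finrank 𝕜 ((N j) →ₗ[𝕜] (N (i + j))) := by
    rw [hℓ i]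
    exact LinearMap.finrank_le_finrank_of_injective hinj
  rw [hℓ j, hℓ (i + j)]
  calc ℓ i ≤ Module.finrank 𝕜 ((N j) →ₗ[𝕜] (N (i + j))) := h1
    _ = Module.finrank 𝕜 (N j) * Module.finrank 𝕜 (N (i + j)) :=
      Module.finrank_linearMap 𝕜 𝕜 (N j) (N (i + j))
end

section
/- Let $k \geq 1$ and let $\Delta$ be a pure $2k$-dimensional simplicial complex such that $g_{k+1}(\Delta) = 0$ and $g_k(\mathrm{lk}(v)) \geq 1$ for every vertex $v$ of $\Delta$. Then $g_k(\Delta) \geq \frac{f_0(\Delta)}{k+2}$. -/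
open Finset

variable {V : Type*} [Fintype V] [DecidableEq V]

/-- `fNum Δ i` is the number of faces of `Δ` of cardinality `i`, i.e. `f_{i-1}(Δ)`. -/
def fNum (Δ : Finset (Finset V)) (i : ℕ) : ℤ := ((Δ.filter fun σ => σ.card = i).card : ℤ)

/-- The `h`-numbers of a `(d-1)`-dimensional complex:
`h_j = ∑_{i=0}^{j} (-1)^{j-i} C(d-i, j-i) f_{i-1}`. -/
def hNum (Δ : Finset (Finset V)) (d j : ℕ) : ℤ :=
  ∑ i ∈ Finset.range (j + 1), (-1 : ℤ) ^ (j - i) * (Nat.choose (d - i) (j - i) : ℤ) * fNum Δ i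

/-- The `g`-numbers: `g_j = h_j - h_{j-1}`, with `h_{-1} = 0`. -/
def gNum (Δ : Finset (Finset V)) (d j : ℕ) : ℤ :=
  hNum Δ d j - (if j = 0 then 0 else hNum Δ d (j - 1))

/-- The link of a vertex `v`: faces `σ ∈ Δ` with `v ∉ σ` and `σ ∪ {v} ∈ Δ`. -/
def lk (Δ : Finset (Finset V)) (v : V) : Finset (Finset V) :=
  Δ.filter fun σ => v ∉ σ ∧ insert v σ ∈ Δ

lemma sum_fNum_lk (Δ : Finset (Finset V)) (hdc : ∀ σ ∈ Δ, ∀ τ ⊆ σ, τ ∈ Δ) (i : ℕ) :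
    ∑ v : V, fNum (lk Δ v) i = ((i : ℤ) + 1) * fNum Δ (i + 1) := by
  have key : ∑ v : V, ((lk Δ v).filter fun σ => σ.card = i).card
      = (i + 1) * (Δ.filter fun τ => τ.card = i + 1).card := by
    rw [← Finset.card_sigma]
    rw [show (i+1) * (Δ.filter fun τ => τ.card = i + 1).card
        = ∑ τ ∈ Δ.filter (fun τ => τ.card = i + 1), τ.card by
      rw [Finset.sum_congr rfl (fun τ hτ => (Finset.mem_filter.mp hτ).2)]
      simp [mul_comm]]
    rw [← Finset.card_sigma]
    apply Finset.card_bij' (fun (x : Σ _ : V, Finset V) _ => (⟨insert x.1 x.2, x.1⟩ : Σ _ : Finset V, V))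
      (fun (y : Σ _ : Finset V, V) _ => (⟨y.2, y.1.erase y.2⟩ : Σ _ : V, Finset V))
    · rintro ⟨v, σ⟩ hx
      simp only [Finset.mem_sigma, Finset.mem_univ, Finset.mem_filter, lk, true_and] at hx ⊢
      obtain ⟨⟨hσ, hv, hins⟩, hcard⟩ := hx
      exact ⟨⟨hins, by rw [Finset.card_insert_of_notMem hv, hcard]⟩, Finset.mem_insert_self _ _⟩
    · rintro ⟨τ, v⟩ hy
      simp only [Finset.mem_sigma, Finset.mem_filter, Finset.mem_univ, lk, true_and] at hy ⊢
      obtain ⟨⟨hτ, hcard⟩, hv⟩ := hy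
      refine ⟨⟨hdc τ hτ _ (Finset.erase_subset _ _), Finset.notMem_erase _ _, ?_⟩, ?_⟩
      · rw [Finset.insert_erase hv]; exact hτ
      · rw [Finset.card_erase_of_mem hv, hcard]; rfl
    · rintro ⟨v, σ⟩ hx
      simp only [Finset.mem_sigma, Finset.mem_univ, Finset.mem_filter, lk, true_and] at hx
      simp [Finset.erase_insert hx.1.2.1]
    · rintro ⟨τ, v⟩ hy
      simp only [Finset.mem_sigma, Finset.mem_filter, lk] at hy
      simp [Finset.insert_erase hy.2]
  have : ∑ v : V, fNum (lk Δ v) i = ((∑ v : V, ((lk Δ v).filter fun σ => σ.card = i).card : ℕ) : ℤ) := by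
    push_cast [fNum]; rfl
  rw [this, key, fNum]; push_cast; ring

lemma chooseA {d i j : ℕ} (hij : i < j) (hjd : j ≤ d) :
    ((j : ℤ) - i) * (Nat.choose (d - i) (j - i) : ℤ)
      = (((d - j : ℕ) : ℤ) + 1) * (Nat.choose (d - i) (j - i - 1) : ℤ) := by
  have h := Nat.choose_succ_right_eq (d - i) (j - i - 1)
  have h1 : j - i - 1 + 1 = j - i := by omega
  have h2 : d - i - (j - i - 1) = d - j + 1 := by omega
  rw [h1, h2] at h
  have h3 : ((j : ℤ) - i) = ((j - i : ℕ) : ℤ) := by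
    push_cast [Nat.cast_sub (le_of_lt hij)]; ring
  rw [h3]
  have := congrArg (Nat.cast : ℕ → ℤ) h
  push_cast at this
  linarith

lemma chooseB {d j : ℕ} (hjd : j ≤ d) :
    ((j : ℤ) + 1) * (Nat.choose (d + 1) (j + 1) : ℤ)
      = (((d - j : ℕ) : ℤ) + 1) * (Nat.choose (d + 1) j : ℤ) := by
  have h := Nat.choose_succ_right_eq (d + 1) j
  have h2 : d + 1 - j = d - j + 1 := by omega
  rw [h2] at h
  have := congrArg (Nat.cast : ℕ → ℤ) h
  push_cast at this
  linarith

lemma sum_hNum_lk (Δ : Finset (Finset V)) (hdc : ∀ σ ∈ Δ, ∀ τ ⊆ σ, τ ∈ Δ)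
    (d j : ℕ) (hj : j ≤ d) :
    ∑ v : V, hNum (lk Δ v) d j
      = ((j : ℤ) + 1) * hNum Δ (d + 1) (j + 1) + (((d - j : ℕ) : ℤ) + 1) * hNum Δ (d + 1) j := by
  set dj1 : ℤ := ((d - j : ℕ) : ℤ) + 1 with hdj1
  have L : ∑ v : V, hNum (lk Δ v) d j
      = ∑ i ∈ Finset.range (j + 1),
          (-1 : ℤ) ^ (j - i) * (Nat.choose (d - i) (j - i) : ℤ) * (((i : ℤ) + 1) * fNum Δ (i + 1)) := by
    unfold hNum
    rw [Finset.sum_comm]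
    refine Finset.sum_congr rfl fun i _ => ?_
    rw [← Finset.mul_sum, sum_fNum_lk Δ hdc i]
  rw [L]
  unfold hNum
  rw [Finset.mul_sum, Finset.mul_sum, Finset.sum_range_succ' (fun i =>
      ((j : ℤ) + 1) * ((-1 : ℤ) ^ (j + 1 - i) * (Nat.choose (d + 1 - i) (j + 1 - i) : ℤ) * fNum Δ i)),
    Finset.sum_range_succ' (fun i =>
      dj1 * ((-1 : ℤ) ^ (j - i) * (Nat.choose (d + 1 - i) (j - i) : ℤ) * fNum Δ i)),
    Finset.sum_range_succ (fun i =>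
      ((j : ℤ) + 1) * ((-1 : ℤ) ^ (j + 1 - (i + 1)) * (Nat.choose (d + 1 - (i + 1)) (j + 1 - (i + 1)) : ℤ) * fNum Δ (i + 1))),
    Finset.sum_range_succ (fun i =>
      (-1 : ℤ) ^ (j - i) * (Nat.choose (d - i) (j - i) : ℤ) * (((i : ℤ) + 1) * fNum Δ (i + 1)))]
  have e0 : ((j : ℤ) + 1) * ((-1 : ℤ) ^ (j + 1 - 0) * (Nat.choose (d + 1 - 0) (j + 1 - 0) : ℤ) * fNum Δ 0)
      + dj1 * ((-1 : ℤ) ^ (j - 0) * (Nat.choose (d + 1 - 0) (j - 0) : ℤ) * fNum Δ 0) = 0 := by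
    simp only [Nat.sub_zero]
    have := chooseB (d := d) (j := j) hj
    rw [pow_succ]
    linear_combination (-((-1 : ℤ) ^ j) * fNum Δ 0) * this
  have etop : (-1 : ℤ) ^ (j - j) * (Nat.choose (d - j) (j - j) : ℤ) * (((j : ℤ) + 1) * fNum Δ (j + 1))
      = ((j : ℤ) + 1) * ((-1 : ℤ) ^ (j + 1 - (j + 1)) * (Nat.choose (d + 1 - (j + 1)) (j + 1 - (j + 1)) : ℤ) * fNum Δ (j + 1)) := by
    simp [Nat.sub_self]
  have emid : ∀ i ∈ Finset.range j,
      (-1 : ℤ) ^ (j - i) * (Nat.choose (d - i) (j - i) : ℤ) * (((i : ℤ) + 1) * fNum Δ (i + 1))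
      = ((j : ℤ) + 1) * ((-1 : ℤ) ^ (j + 1 - (i + 1)) * (Nat.choose (d + 1 - (i + 1)) (j + 1 - (i + 1)) : ℤ) * fNum Δ (i + 1))
        + dj1 * ((-1 : ℤ) ^ (j - (i + 1)) * (Nat.choose (d + 1 - (i + 1)) (j - (i + 1)) : ℤ) * fNum Δ (i + 1)) := by
    intro i hi
    have hij : i < j := Finset.mem_range.mp hi
    have h1 : j + 1 - (i + 1) = j - i := by omega
    have h2 : d + 1 - (i + 1) = d - i := by omega
    have h3 : j - (i + 1) = j - i - 1 := by omega
    rw [h1, h2, h3]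
    have hpow : (-1 : ℤ) ^ (j - i) = -(-1 : ℤ) ^ (j - i - 1) := by
      set m := j - i - 1 with hm
      rw [show j - i = m + 1 by omega, pow_succ]; ring
    rw [hpow]
    linear_combination ((-1 : ℤ) ^ (j - i - 1) * fNum Δ (i + 1)) * chooseA hij hj
  rw [Finset.sum_congr rfl emid, Finset.sum_add_distrib]
  linarith [e0, etop]

lemma lk_empty_of_not_vertex (Δ : Finset (Finset V)) (hdc : ∀ σ ∈ Δ, ∀ τ ⊆ σ, τ ∈ Δ)
    (v : V) (hv : ({v} : Finset V) ∉ Δ) : lk Δ v = ∅ := by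
  rw [Finset.eq_empty_iff_forall_notMem]
  intro σ hσ
  rw [lk, Finset.mem_filter] at hσ
  exact hv (hdc _ hσ.2.2 {v} (by simp))

lemma gNum_empty (d j : ℕ) : gNum (∅ : Finset (Finset V)) d j = 0 := by
  have h : ∀ j', hNum (∅ : Finset (Finset V)) d j' = 0 := by
    intro j'
    unfold hNum fNum
    simp
  simp [gNum, h]

lemma fNum_one (Δ : Finset (Finset V)) :
    fNum Δ 1 = (((Finset.univ : Finset V).filter fun v => ({v} : Finset V) ∈ Δ).card : ℤ) := by
  unfold fNum
  congr 1
  have himg : Δ.filter (fun σ => σ.card = 1)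
      = ((Finset.univ : Finset V).filter fun v => ({v} : Finset V) ∈ Δ).image
          (fun v => ({v} : Finset V)) := by
    ext σ
    simp only [Finset.mem_filter, Finset.mem_image, Finset.mem_univ, true_and,
      Finset.card_eq_one]
    constructor
    · rintro ⟨hσ, a, rfl⟩
      exact ⟨a, hσ, rfl⟩
    · rintro ⟨a, ha, rfl⟩
      exact ⟨ha, a, rfl⟩
  rw [himg, Finset.card_image_of_injective _ Finset.singleton_injective]

/-- If `Δ` is a pure `2k`-dimensional simplicial complex with `g_{k+1}(Δ) = 0` and
`g_k(lk(v)) ≥ 1` for every vertex `v`, then `g_k(Δ) ≥ f₀(Δ)/(k+2)`. -/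
theorem stmt18 (Δ : Finset (Finset V)) (k : ℕ) (hk : 1 ≤ k)
    (hdc : ∀ σ ∈ Δ, ∀ τ ⊆ σ, τ ∈ Δ) (hne : (∅ : Finset V) ∈ Δ)
    (hpure : ∀ σ ∈ Δ, ∃ F ∈ Δ, σ ⊆ F ∧ F.card = 2 * k + 1)
    (hgtop : gNum Δ (2 * k + 1) (k + 1) = 0)
    (hlk : ∀ v : V, ({v} : Finset V) ∈ Δ → 1 ≤ gNum (lk Δ v) (2 * k) k) :
    (fNum Δ 1 : ℚ) / ((k : ℚ) + 2) ≤ (gNum Δ (2 * k + 1) k : ℚ) := by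
  -- the summation identity
  have hid : ∑ v : V, gNum (lk Δ v) (2 * k) k
      = ((k : ℤ) + 1) * gNum Δ (2 * k + 1) (k + 1) + ((k : ℤ) + 2) * gNum Δ (2 * k + 1) k := by
    have hk0 : k ≠ 0 := by omega
    have S1 := sum_hNum_lk Δ hdc (2 * k) k (by omega)
    have S2 := sum_hNum_lk Δ hdc (2 * k) (k - 1) (by omega)
    have c1 : ((2 * k - k : ℕ) : ℤ) + 1 = (k : ℤ) + 1 := by
      have : (2 * k - k : ℕ) = k := by omega
      rw [this]
    have c2 : ((2 * k - (k - 1) : ℕ) : ℤ) + 1 = (k : ℤ) + 2 := by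
      have : (2 * k - (k - 1) : ℕ) = k + 1 := by omega
      rw [this]; push_cast; ring
    have e1 : k - 1 + 1 = k := by omega
    rw [c1] at S1
    have c3 : ((k - 1 : ℕ) : ℤ) = (k : ℤ) - 1 := by omega
    rw [c2, e1, c3] at S2
    have : ∑ v : V, gNum (lk Δ v) (2 * k) k
        = (∑ v : V, hNum (lk Δ v) (2 * k) k) - ∑ v : V, hNum (lk Δ v) (2 * k) (k - 1) := by
      rw [← Finset.sum_sub_distrib]
      refine Finset.sum_congr rfl fun v _ => ?_
      rw [gNum, if_neg hk0]
    rw [this, S1, S2]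
    unfold gNum
    rw [if_neg hk0, if_neg (Nat.succ_ne_zero k)]
    simp only [Nat.add_sub_cancel]
    push_cast
    ring
  -- lower bound on the sum
  have hlow : fNum Δ 1 ≤ ∑ v : V, gNum (lk Δ v) (2 * k) k := by
    rw [fNum_one Δ]
    rw [← Finset.sum_filter_add_sum_filter_not Finset.univ (fun v => ({v} : Finset V) ∈ Δ)]
    have hz : ∑ v ∈ Finset.univ.filter (fun v => ¬ ({v} : Finset V) ∈ Δ),
        gNum (lk Δ v) (2 * k) k = 0 := by
      apply Finset.sum_eq_zero
      intro v hv
      rw [lk_empty_of_not_vertex Δ hdc v (Finset.mem_filter.mp hv).2, gNum_empty]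
    rw [hz, add_zero]
    calc (((Finset.univ.filter fun v => ({v} : Finset V) ∈ Δ).card : ℤ))
        = ∑ v ∈ Finset.univ.filter (fun v => ({v} : Finset V) ∈ Δ), 1 := by simp
      _ ≤ _ := Finset.sum_le_sum fun v hv => hlk v (Finset.mem_filter.mp hv).2
  rw [hid, hgtop, mul_zero, zero_add] at hlow
  rw [div_le_iff₀ (by positivity)]
  have : (fNum Δ 1 : ℚ) ≤ ((k : ℚ) + 2) * (gNum Δ (2 * k + 1) k : ℚ) := by exact_mod_cast hlow
  linarith
end
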